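/- Let Γ = (G,I,O,λ) be a labelled open graph and let S ⊆ I, i.e. all neighbours of the new vertex are inputs. Let Γ' be the YZ-insertion of a fresh vertex z with neighbourhood S into Γ. If Γ has a Pauli flow, then Γ' has a Pauli flow. -/

import Mathlib

open scoped Classical
noncomputable section

inductive MLabel : Type
  | X | Y | Z | XY | XZ | YZ
  deriving DecidableEq

variable {V : Type*}

/-- The odd neighbourhood of a set `A`: vertices with an odd number of neighbours in `A`. -/
def oddN (G : SimpleGraph V) (A : Set V) : Set V :=
  {v | Odd ((A ∩ G.neighborSet v).ncard)}

/-- The closed odd neighbourhood of a set `A`. -/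
def cOddN (G : SimpleGraph V) (A : Set V) : Set V :=
  symmDiff (oddN G A) A

/-- A Pauli flow on the labelled open graph `(G, I, O, lab)`. -/
structure IsPauliFlow (G : SimpleGraph V) (I O : Set V) (lab : V → MLabel)
    (c : V → Set V) (prec : V → V → Prop) : Prop where
  corr_sub : ∀ u, u ∉ O → c u ⊆ Iᶜ
  irrefl : ∀ u, ¬ prec u u
  trans : ∀ ⦃a b d⦄, prec a b → prec b d → prec a d
  p1 : ∀ u, u ∉ O → ∀ v ∈ c u, v ∉ O → u ≠ v →
    lab v ∉ ({MLabel.X, MLabel.Y} : Set MLabel) → prec u v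
  p2 : ∀ u, u ∉ O → ∀ v ∈ oddN G (c u), v ∉ O → u ≠ v →
    lab v ∉ ({MLabel.Y, MLabel.Z} : Set MLabel) → prec u v
  p3 : ∀ u, u ∉ O → ∀ v, v ∉ O → ¬ prec u v → u ≠ v → lab v = MLabel.Y →
    v ∉ cOddN G (c u)
  p4 : ∀ u, u ∉ O → lab u = MLabel.XY → u ∉ c u ∧ u ∈ oddN G (c u)
  p5 : ∀ u, u ∉ O → lab u = MLabel.XZ → u ∈ c u ∧ u ∈ oddN G (c u)
  p6 : ∀ u, u ∉ O → lab u = MLabel.YZ → u ∈ c u ∧ u ∉ oddN G (c u)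
  p7 : ∀ u, u ∉ O → lab u = MLabel.X → u ∈ oddN G (c u)
  p8 : ∀ u, u ∉ O → lab u = MLabel.Z → u ∈ c u
  p9 : ∀ u, u ∉ O → lab u = MLabel.Y → u ∈ cOddN G (c u)

/-- `A` is focused over `S`. -/
def FocusedOver (G : SimpleGraph V) (lab : V → MLabel) (A S : Set V) : Prop :=
  (∀ w ∈ S ∩ A, lab w ∈ ({MLabel.XY, MLabel.X, MLabel.Y} : Set MLabel)) ∧
  (∀ w ∈ S ∩ oddN G A, lab w ∈ ({MLabel.XZ, MLabel.YZ, MLabel.Y, MLabel.Z} : Set MLabel)) ∧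
  (∀ w ∈ S, lab w = MLabel.Y → w ∉ cOddN G A)

/-- A focused Pauli flow. -/
def IsFocusedPauliFlow (G : SimpleGraph V) (I O : Set V) (lab : V → MLabel)
    (c : V → Set V) (prec : V → V → Prop) : Prop :=
  IsPauliFlow G I O lab c prec ∧ ∀ v, v ∉ O → FocusedOver G lab (c v) (Oᶜ \ {v})

def HasPauliFlow (G : SimpleGraph V) (I O : Set V) (lab : V → MLabel) : Prop :=
  ∃ c prec, IsPauliFlow G I O lab c prec

/-- The graph that results from inserting a fresh vertex (`none`) with
neighbourhood `S` into `G`. -/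
def insertGraph (G : SimpleGraph V) (S : Set V) : SimpleGraph (Option V) where
  Adj a b := match a, b with
    | some x, some y => G.Adj x y
    | some x, none => x ∈ S
    | none, some y => y ∈ S
    | none, none => False
  symm := by
    constructor
    rintro (_ | x) (_ | y) h
    · exact h
    · exact h
    · exact h
    · exact G.adj_symm h
  loopless := by
    constructor
    rintro (_ | x) h
    · exact h
    · exact (G.ne_of_adj h) rfl

/-- The measurement labelling after inserting a fresh vertex measured `ℓ`. -/
def insertLab (lab : V → MLabel) (ℓ : MLabel) : Option V → MLabel
  | none => ℓ
  | some v => lab v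

/-- The set 𝒳 of X-like internal vertices. -/
def mX (I O : Set V) (lab : V → MLabel) : Set V :=
  {v | v ∉ I ∧ v ∉ O ∧ lab v ∈ ({MLabel.XY, MLabel.X, MLabel.Y} : Set MLabel)}

/-- The set ℒ of planar-measured internal vertices. -/
def mL (I O : Set V) (lab : V → MLabel) : Set V :=
  {v | v ∉ I ∧ v ∉ O ∧ lab v ∈ ({MLabel.XY, MLabel.XZ, MLabel.YZ} : Set MLabel)}


section AuxYZ

variable {V : Type*} {G : SimpleGraph V} {S : Set V}

lemma image_inter_neighborSet_some (A : Set V) (w : V) :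
    some '' A ∩ (insertGraph G S).neighborSet (some w) = some '' (A ∩ G.neighborSet w) := by
  ext (_ | x)
  · simp [SimpleGraph.neighborSet, insertGraph]
  · simp [SimpleGraph.neighborSet, insertGraph]

lemma image_inter_neighborSet_none (A : Set V) :
    some '' A ∩ (insertGraph G S).neighborSet none = some '' (A ∩ S) := by
  ext (_ | x)
  · simp [SimpleGraph.neighborSet, insertGraph]
  · simp [SimpleGraph.neighborSet, insertGraph]

lemma oddN_image (A : Set V) (hAS : A ∩ S = ∅) :
    oddN (insertGraph G S) (some '' A) = some '' oddN G A := by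
  ext (_ | x)
  · simp only [oddN, Set.mem_setOf_eq, image_inter_neighborSet_none, hAS]
    simp
  · simp only [oddN, Set.mem_setOf_eq, image_inter_neighborSet_some,
      Set.ncard_image_of_injective _ (Option.some_injective V)]
    simp

lemma cOddN_image (A : Set V) (hAS : A ∩ S = ∅) :
    cOddN (insertGraph G S) (some '' A) = some '' cOddN G A := by
  rw [cOddN, cOddN, oddN_image A hAS, Set.image_symmDiff (Option.some_injective V)]

lemma oddN_none : oddN (insertGraph G S) {none} = some '' S := by
  ext (_ | x)
  · have : ({none} : Set (Option V)) ∩ (insertGraph G S).neighborSet none = ∅ := by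
      ext (_ | y) <;> simp [SimpleGraph.neighborSet, insertGraph]
    simp [oddN, this]
  · have : ({none} : Set (Option V)) ∩ (insertGraph G S).neighborSet (some x) =
        if x ∈ S then {none} else ∅ := by
      split_ifs with hx <;> ext (_ | y) <;>
        simp [SimpleGraph.neighborSet, insertGraph, hx]
    simp only [oddN, Set.mem_setOf_eq, this]
    split_ifs with hx <;> simp [hx]

end AuxYZ

/-- a YZ-measured vertex whose neighbours are all inputs can
always be inserted while preserving the existence of Pauli flow. -/
theorem yz_insertion_inputs_preserves_pauli_flow {V : Type*} [Fintype V]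
    (G : SimpleGraph V) (I O : Set V) (lab : V → MLabel)
    (S : Set V) (hS : S ⊆ I)
    (h : HasPauliFlow G I O lab) :
    HasPauliFlow (insertGraph G S) (some '' I) (some '' O)
      (insertLab lab MLabel.YZ) := by
  obtain ⟨c, prec, hpf⟩ := h
  classical
  refine ⟨fun u => match u with | none => {none} | some v => some '' c v,
    fun a b => match a, b with
      | none, some _ => True
      | some x, some y => prec x y
      | _, _ => False, ?_⟩
  have hdisj : ∀ v, v ∉ O → c v ∩ S = ∅ := by
    intro v hv
    apply Set.eq_empty_of_forall_notMem
    rintro x ⟨hx, hxS⟩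
    exact hpf.corr_sub v hv hx (hS hxS)
  have hOdd : ∀ v, v ∉ O →
      oddN (insertGraph G S) (some '' c v) = some '' oddN G (c v) := fun v hv =>
    oddN_image (c v) (hdisj v hv)
  constructor
  · -- corr_sub
    rintro (_ | v) hu w hw
    · have hwn : w = none := hw
      subst hwn; simp
    · obtain ⟨x, hx, rfl⟩ := hw
      have hvO : v ∉ O := by simpa using hu
      simpa using hpf.corr_sub v hvO hx
  · -- irrefl
    rintro (_ | v) h
    · exact h
    · exact hpf.irrefl v h
  · -- trans
    rintro (_ | a) (_ | b) (_ | d) hab hbd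
    · exact hab
    · exact hab.elim
    · exact hbd.elim
    · exact trivial
    · exact hab
    · exact hab.elim
    · exact hbd.elim
    · exact hpf.trans hab hbd
  · -- p1
    rintro (_ | v) hu w hw hwO huw hwlab
    · have hwn : w = none := hw
      exact absurd hwn.symm huw
    · obtain ⟨x, hx, rfl⟩ := hw
      have hvO : v ∉ O := by simpa using hu
      have hxO : x ∉ O := by simpa using hwO
      exact hpf.p1 v hvO x hx hxO (by simpa using huw) hwlab
  · -- p2
    rintro (_ | v) hu w hw hwO huw hwlab
    · rw [show oddN (insertGraph G S) {none} = some '' S from oddN_none] at hw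
      obtain ⟨x, _, rfl⟩ := hw
      exact trivial
    · have hvO : v ∉ O := by simpa using hu
      rw [hOdd v hvO] at hw
      obtain ⟨x, hx, rfl⟩ := hw
      have hxO : x ∉ O := by simpa using hwO
      exact hpf.p2 v hvO x hx hxO (by simpa using huw) hwlab
  · -- p3
    rintro (_ | v) hu w hwO hnp huw hlY
    · cases w with
      | none => exact absurd rfl huw
      | some x => exact absurd trivial hnp
    · cases w with
      | none => simp [insertLab] at hlY
      | some x =>
        have hvO : v ∉ O := by simpa using hu
        have hxO : x ∉ O := by simpa using hwO
        have hvx : v ≠ x := by simpa using huw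
        have hres := hpf.p3 v hvO x hxO hnp hvx hlY
        show some x ∉ cOddN (insertGraph G S) (some '' c v)
        rw [cOddN_image (c v) (hdisj v hvO)]
        simpa using hres
  · -- p4
    rintro (_ | v) hu hl
    · simp [insertLab] at hl
    · have hvO : v ∉ O := by simpa using hu
      have := hpf.p4 v hvO hl
      rw [hOdd v hvO]
      exact ⟨by simpa using this.1, by simpa using this.2⟩
  · -- p5
    rintro (_ | v) hu hl
    · simp [insertLab] at hl
    · have hvO : v ∉ O := by simpa using hu
      have := hpf.p5 v hvO hl
      rw [hOdd v hvO]
      exact ⟨by simpa using this.1, by simpa using this.2⟩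
  · -- p6
    rintro (_ | v) hu hl
    · refine ⟨rfl, ?_⟩
      rw [show oddN (insertGraph G S) {none} = some '' S from oddN_none]
      simp
    · have hvO : v ∉ O := by simpa using hu
      have := hpf.p6 v hvO hl
      rw [hOdd v hvO]
      exact ⟨by simpa using this.1, by simpa using this.2⟩
  · -- p7
    rintro (_ | v) hu hl
    · simp [insertLab] at hl
    · have hvO : v ∉ O := by simpa using hu
      rw [hOdd v hvO]
      simpa using hpf.p7 v hvO hl
  · -- p8
    rintro (_ | v) hu hl
    · simp [insertLab] at hl
    · have hvO : v ∉ O := by simpa using hu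
      show some v ∈ some '' c v
      simpa using hpf.p8 v hvO hl
  · -- p9
    rintro (_ | v) hu hl
    · simp [insertLab] at hl
    · have hvO : v ∉ O := by simpa using hu
      show some v ∈ cOddN (insertGraph G S) (some '' c v)
      rw [cOddN_image (c v) (hdisj v hvO)]
      simpa using hpf.p9 v hvO hl

end
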